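/- arXiv:2306.12563 — 6 statements merged into one kernel-verified Lean document; each statement's English description precedes it below -/
import Mathlib

section
/- Let i ≥ j be natural numbers and a_1,...,a_n ∈ ker(φ^i). Then ker(φ^i) = a_1·ker(φ^j) ∪ ... ∪ a_n·ker(φ^j) if and only if the kernel of the restriction of φ^{i-j} to Im(φ^j) equals {φ^j(a_1), ..., φ^j(a_n)}. -/
open scoped Pointwise

theorem stmt4 {G : Type*} [Group G] (φ : G →* G) (i j : ℕ) (hij : j ≤ i)
    (n : ℕ) (a : Fin n → G) (ha : ∀ r : Fin n, (⇑φ)^[i] (a r) = 1) :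
    {g : G | (⇑φ)^[i] g = 1} = ⋃ r : Fin n, a r • {g : G | (⇑φ)^[j] g = 1} ↔
      {x : G | x ∈ Set.range ((⇑φ)^[j]) ∧ (⇑φ)^[i - j] x = 1} =
        {x : G | ∃ r : Fin n, x = (⇑φ)^[j] (a r)} := by
  have key : ∀ g : G, (⇑φ)^[i] g = (⇑φ)^[i - j] ((⇑φ)^[j] g) := by
    intro g
    conv_lhs => rw [← Nat.sub_add_cancel hij]
    rw [Function.iterate_add_apply]
  have hcoset : ∀ (r : Fin n) (g : G),
      g ∈ a r • {g : G | (⇑φ)^[j] g = 1} ↔ (⇑φ)^[j] g = (⇑φ)^[j] (a r) := by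
    intro r g
    rw [Set.mem_smul_set_iff_inv_smul_mem]
    simp only [smul_eq_mul, Set.mem_setOf_eq, iterate_map_mul,
      iterate_map_inv, inv_mul_eq_one]
    exact eq_comm
  constructor
  · intro h
    ext x
    simp only [Set.mem_setOf_eq]
    constructor
    · rintro ⟨⟨g, rfl⟩, hx⟩
      have hg : (⇑φ)^[i] g = 1 := by rw [key]; exact hx
      have hg' : g ∈ ⋃ r, a r • {g : G | (⇑φ)^[j] g = 1} := h ▸ hg
      obtain ⟨r, hr⟩ := Set.mem_iUnion.mp hg'
      exact ⟨r, (hcoset r g).mp hr⟩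
    · rintro ⟨r, rfl⟩
      exact ⟨⟨a r, rfl⟩, by rw [← key]; exact ha r⟩
  · intro h
    ext g
    simp only [Set.mem_setOf_eq, Set.mem_iUnion]
    rw [key]
    constructor
    · intro hg
      have hmem : (⇑φ)^[j] g ∈
          {x : G | x ∈ Set.range ((⇑φ)^[j]) ∧ (⇑φ)^[i - j] x = 1} := ⟨⟨g, rfl⟩, hg⟩
      rw [h] at hmem
      obtain ⟨r, hr⟩ := hmem
      exact ⟨r, (hcoset r g).mpr hr⟩
    · rintro ⟨r, hr⟩
      rw [(hcoset r g).mp hr, ← key]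
      exact ha r
end

section
/- If K = {h} with φ^{π}(h) = h for π ≥ 1 minimal, and the restriction of φ to Im(φ^k) is injective, then there is no x ∈ G with φ-ord_K(x) = P + k where P ≥ π. -/
noncomputable def phiOrd {G : Type*} (f : G → G) (K : Set G) (g : G) : ℕ∞ :=
  sInf ((fun k : ℕ => (k : ℕ∞)) '' {k : ℕ | f^[k] g ∈ K})

theorem stmt6 {G : Type*} [Group G] (φ : G →* G) (k P π : ℕ) (h : G)
    (hinj : Set.InjOn ⇑φ (Set.range ((⇑φ)^[k])))
    (hπ : 1 ≤ π) (hper : (⇑φ)^[π] h = h)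
    (hmin : ∀ i : ℕ, 0 < i → i < π → (⇑φ)^[i] h ≠ h)
    (hP : π ≤ P) :
    ∀ x : G, phiOrd ⇑φ {h} x ≠ ((P + k : ℕ) : ℕ∞) := by
  intro x hx
  set S : Set ℕ := {n : ℕ | (⇑φ)^[n] x ∈ ({h} : Set G)} with hS
  have hne : S.Nonempty := by
    by_contra hemp
    rw [Set.not_nonempty_iff_eq_empty] at hemp
    rw [phiOrd] at hx
    rw [show {n : ℕ | (⇑φ)^[n] x ∈ ({h} : Set G)} = (∅ : Set ℕ) from hemp] at hx
    rw [Set.image_empty, sInf_empty] at hx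
    exact (ENat.top_ne_coe _) hx
  have heq : phiOrd ⇑φ {h} x = ((sInf S : ℕ) : ℕ∞) := by
    apply le_antisymm
    · exact sInf_le ⟨sInf S, Nat.sInf_mem hne, rfl⟩
    · apply le_sInf
      rintro _ ⟨m, hm, rfl⟩
      simp only
      exact_mod_cast Nat.sInf_le hm
  rw [heq] at hx
  have hPk : sInf S = P + k := by exact_mod_cast hx
  have hmem : (⇑φ)^[P + k] x = h := by
    have hh := Nat.sInf_mem hne
    rw [hPk] at hh
    exact hh
  have hlt : ∀ m < P + k, (⇑φ)^[m] x ≠ h := by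
    intro m hm hmx
    have : sInf S ≤ m := Nat.sInf_le hmx
    omega
  have hmaps : Set.MapsTo ⇑φ (Set.range ((⇑φ)^[k])) (Set.range ((⇑φ)^[k])) := by
    rintro _ ⟨g, rfl⟩
    exact ⟨φ g, by rw [← Function.iterate_succ_apply, Function.iterate_succ_apply']⟩
  have hinjn : Set.InjOn ((⇑φ)^[π]) (Set.range ((⇑φ)^[k])) := hinj.iterate hmaps π
  have hkπ : k ≤ π * k := Nat.le_mul_of_pos_left k hπ
  have hh : h ∈ Set.range ((⇑φ)^[k]) := by
    refine ⟨(⇑φ)^[π * k - k] h, ?_⟩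
    rw [← Function.iterate_add_apply, show k + (π * k - k) = π * k by omega,
      Function.iterate_mul]
    exact Function.iterate_fixed hper k
  have hy : (⇑φ)^[P + k - π] x ∈ Set.range ((⇑φ)^[k]) := by
    refine ⟨(⇑φ)^[P - π] x, ?_⟩
    rw [← Function.iterate_add_apply]
    congr 1
    omega
  have key : (⇑φ)^[π] ((⇑φ)^[P + k - π] x) = (⇑φ)^[π] h := by
    rw [← Function.iterate_add_apply, show π + (P + k - π) = P + k by omega, hmem, hper]
  exact hlt (P + k - π) (by omega) (hinjn hy hh key)
end

section
/- Let G be a group, K = {h} a singleton, φ ∈ End(G), and suppose all φ-periodic orbits have length at most p and φ restricted to Im(φ^k) is injective. Then the φ-spectrum of K is {0,1,...,n} for some n ≤ p + k - 1 whenever h is periodic under φ. -/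
lemma phiOrd_eq_iff {G : Type*} (f : G → G) (K : Set G) (x : G) (m : ℕ) :
    phiOrd f K x = (m : ℕ∞) ↔ (f^[m] x ∈ K ∧ ∀ i < m, f^[i] x ∉ K) := by
  unfold phiOrd
  set A := {k : ℕ | f^[k] x ∈ K} with hA
  by_cases hne : A.Nonempty
  · have hcoe : sInf ((fun k : ℕ => (k : ℕ∞)) '' A) = ((sInf A : ℕ) : ℕ∞) := by
      apply le_antisymm
      · exact sInf_le ⟨sInf A, Nat.sInf_mem hne, rfl⟩
      · refine le_sInf ?_
        rintro _ ⟨a, ha, rfl⟩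
        exact (Nat.cast_le (α := ℕ∞)).mpr (Nat.sInf_le ha)
    rw [hcoe]
    constructor
    · intro hEq
      have hm : sInf A = m := by exact_mod_cast hEq
      refine ⟨by have := Nat.sInf_mem hne; rwa [hm] at this, ?_⟩
      intro i hi
      exact Nat.notMem_of_lt_sInf (hm ▸ hi)
    · rintro ⟨h1, h2⟩
      have hm : sInf A = m := by
        apply le_antisymm (Nat.sInf_le h1)
        by_contra hlt
        push_neg at hlt
        exact h2 _ hlt (Nat.sInf_mem hne)
      exact_mod_cast hm
  · rw [Set.not_nonempty_iff_eq_empty] at hne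
    rw [hne, Set.image_empty, sInf_empty]
    constructor
    · intro hEq; exact absurd hEq (by simp)
    · rintro ⟨h1, -⟩
      exact absurd (show m ∈ A from h1) (by simp [hne])

theorem stmt7 {G : Type*} [Group G] (φ : G →* G) (k p π : ℕ) (h : G)
    (hinj : Set.InjOn ⇑φ (Set.range ((⇑φ)^[k])))
    (hπ : 1 ≤ π) (hπp : π ≤ p) (hper : (⇑φ)^[π] h = h)
    (hmin : ∀ i : ℕ, 0 < i → i < π → (⇑φ)^[i] h ≠ h) :
    ∃ n ≤ p + k - 1,
      {m : ℕ | ∃ x : G, phiOrd ⇑φ {h} x = (m : ℕ∞)} = Set.Iic n := by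
  set R := Set.range ((⇑φ)^[k]) with hR
  set S : Set ℕ := {m : ℕ | ∃ x : G, phiOrd ⇑φ {h} x = (m : ℕ∞)} with hS
  have hmem : ∀ m : ℕ, m ∈ S ↔
      ∃ x : G, (⇑φ)^[m] x = h ∧ ∀ i < m, (⇑φ)^[i] x ≠ h := by
    intro m
    simp only [hS, Set.mem_setOf_eq, phiOrd_eq_iff, Set.mem_singleton_iff]
  -- φ maps R into R
  have hmapR : ∀ a ∈ R, φ a ∈ R := by
    rintro a ⟨c, rfl⟩
    exact ⟨φ c, by rw [← Function.iterate_succ_apply, Function.iterate_succ_apply']⟩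
  -- iterates of φ are injective on R
  have hinjIter : ∀ n : ℕ, ∀ a b : G, a ∈ R → b ∈ R →
      (⇑φ)^[n] a = (⇑φ)^[n] b → a = b := by
    intro n
    induction n with
    | zero => intro a b _ _ hab; simpa using hab
    | succ n ih =>
      intro a b ha hb hab
      rw [Function.iterate_succ_apply, Function.iterate_succ_apply] at hab
      exact hinj ha hb (ih _ _ (hmapR a ha) (hmapR b hb) hab)
  have hfixmul : ∀ r : ℕ, (⇑φ)^[π * r] h = h := by
    intro r
    rw [Function.iterate_mul]
    exact Function.iterate_fixed hper r
  have hkle : k ≤ π * k := Nat.le_mul_of_pos_left k (by omega)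
  have hhR : h ∈ R := ⟨(⇑φ)^[π * k - k] h, by
    rw [← Function.iterate_add_apply, show k + (π * k - k) = π * k from by omega]
    exact hfixmul k⟩
  have hbound : ∀ m ∈ S, m ≤ p + k - 1 := by
    intro m hm
    by_contra hgt
    push_neg at hgt
    have hmge : p + k ≤ m := by omega
    obtain ⟨x, hx1, hx2⟩ := (hmem m).mp hm
    have hyR : (⇑φ)^[m - π] x ∈ R :=
      ⟨(⇑φ)^[m - π - k] x, by
        rw [← Function.iterate_add_apply, show k + (m - π - k) = m - π from by omega]⟩
    have h1 : (⇑φ)^[π] ((⇑φ)^[m - π] x) = h := by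
      rw [← Function.iterate_add_apply, show π + (m - π) = m from by omega]
      exact hx1
    have h3 : (⇑φ)^[m - π] x = h := hinjIter π _ _ hyR hhR (h1.trans hper.symm)
    exact hx2 (m - π) (by omega) h3
  have hstep : ∀ m : ℕ, (m + 1) ∈ S → m ∈ S := by
    intro m hm
    obtain ⟨x, hx1, hx2⟩ := (hmem _).mp hm
    refine (hmem m).mpr ⟨φ x, ?_, ?_⟩
    · rw [← Function.iterate_succ_apply]; exact hx1
    · intro i hi hc
      exact hx2 (i + 1) (by omega) (by rw [Function.iterate_succ_apply]; exact hc)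
  have hdesc : ∀ d m : ℕ, (m + d) ∈ S → m ∈ S := by
    intro d
    induction d with
    | zero => intro m hm; simpa using hm
    | succ d ih =>
      intro m hm
      exact ih m (hstep (m + d) (by rwa [show m + d + 1 = m + (d + 1) from by omega]))
  have hne : S.Nonempty :=
    ⟨0, (hmem 0).mpr ⟨h, by simp, fun i hi => absurd hi (Nat.not_lt_zero i)⟩⟩
  have hbdd : BddAbove S := ⟨p + k - 1, fun m hm => hbound m hm⟩
  have hnS : sSup S ∈ S := Nat.sSup_mem hne hbdd
  refine ⟨sSup S, hbound _ hnS, ?_⟩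
  ext m
  simp only [Set.mem_Iic]
  constructor
  · intro hm
    exact le_csSup hbdd hm
  · intro hm
    exact hdesc (sSup S - m) m (by rwa [show m + (sSup S - m) = sSup S from by omega])
end

section
/- For a singleton K = {h}, the φ-spectrum of K equals ℕ if and only if h belongs to the stable image of φ and h is not a periodic point of φ, assuming that the spectrum of any periodic point is finite (e.g. the restriction of φ to some Im(φ^k) is injective and periods are bounded). -/
/-! If `h` lies in every `range φ^[i]` and is not periodic, a preimage `x` of `h` under `φ^[n]`
reaches `h` for the first time at step `n`, since an earlier visit would make `h` periodic.
Conversely, a point `h` of period `m > 0` lies in `range φ^[k]`; a point `x` reaching `h` for the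
first time at step `k + m` would satisfy `φ^[m] (φ^[k] x) = h = φ^[m] h`, and injectivity of `φ` on
`range φ^[k]` would force `φ^[k] x = h`, too early. -/

open Function Set

section

variable {α : Type*} {f : α → α}

lemma phiOrd_eq_natCast_iff {K : Set α} {g : α} {n : ℕ} :
    phiOrd f K g = n ↔ f^[n] g ∈ K ∧ ∀ i < n, f^[i] g ∉ K := by
  set S := {k : ℕ | f^[k] g ∈ K}
  have hleast : phiOrd f K g = n ↔ IsLeast S n := by
    rcases S.eq_empty_or_nonempty with hS | hS
    · simp [phiOrd, S, hS, IsLeast]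
    rw [phiOrd, sInf_image, ← ENat.natCast_sInf hS, Nat.cast_inj]
    exact ⟨fun hn ↦ hn ▸ ⟨Nat.sInf_mem hS, fun _ ↦ Nat.sInf_le⟩, IsLeast.csInf_eq⟩
  rw [hleast, IsLeast, mem_lowerBounds]
  refine and_congr_right fun _ ↦ forall_congr' fun i ↦ ?_
  rw [← not_imp_not, not_le]
  rfl

variable {h : α}

lemma exists_phiOrd_eq_of_not_isPeriodicPt (hstable : ∀ i, 1 ≤ i → h ∈ range f^[i])
    (haper : ¬ ∃ n, 1 ≤ n ∧ IsPeriodicPt f n h) (n : ℕ) : ∃ x, phiOrd f {h} x = n := by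
  obtain ⟨x, hx⟩ : h ∈ range f^[n] := by
    rcases n.eq_zero_or_pos with rfl | hn
    exacts [⟨h, rfl⟩, hstable n hn]
  refine ⟨x, phiOrd_eq_natCast_iff.2 ⟨hx, fun i hi hxi ↦ haper ⟨n - i, by omega, ?_⟩⟩⟩
  rw [mem_singleton_iff] at hxi
  rw [IsPeriodicPt, IsFixedPt, ← hxi, ← iterate_add_apply, Nat.sub_add_cancel hi.le, hx, hxi]

lemma phiOrd_ne_add_of_injOn {k m : ℕ} (hinj : InjOn f (range f^[k])) (hm : 0 < m)
    (hper : IsPeriodicPt f m h) (x : α) : phiOrd f {h} x ≠ ↑(k + m) := by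
  rw [Ne, phiOrd_eq_natCast_iff]
  rintro ⟨hx, hmin⟩
  have hmaps : MapsTo f (range f^[k]) (range f^[k]) := (Commute.iterate_self f k).mapsTo_range
  have hh : h ∈ range f^[k] := periodicPts_subset_range (mk_mem_periodicPts hm (hper.iterate k))
  refine hmin k (by omega) ((hinj.iterate hmaps m) (mem_range_self x) hh ?_)
  rw [← iterate_add_apply, Nat.add_comm, mem_singleton_iff.1 hx, hper.eq]

end

theorem stmt8_general {G : Type*} [Group G] (φ : G →* G) (h : G) (k : ℕ)
    (hinj : Set.InjOn ⇑φ (Set.range ((⇑φ)^[k]))) :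
    {n : ℕ | ∃ x : G, phiOrd ⇑φ {h} x = (n : ℕ∞)} = Set.univ ↔
      (∀ i : ℕ, 1 ≤ i → h ∈ Set.range ((⇑φ)^[i])) ∧
        ¬ ∃ n : ℕ, 1 ≤ n ∧ (⇑φ)^[n] h = h := by
  rw [eq_univ_iff_forall]
  refine ⟨fun hspec ↦ ⟨fun i _ ↦ ?_, ?_⟩, fun ⟨hstable, haper⟩ ↦
    exists_phiOrd_eq_of_not_isPeriodicPt hstable haper⟩
  · obtain ⟨x, hx⟩ := hspec i
    exact ⟨x, mem_singleton_iff.1 (phiOrd_eq_natCast_iff.1 hx).1⟩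
  · rintro ⟨m, hm, hper⟩
    obtain ⟨x, hx⟩ := hspec (k + m)
    exact phiOrd_ne_add_of_injOn hinj hm hper x hx

theorem stmt8 {G : Type*} [Group G] (φ : G →* G) (h : G) (p k : ℕ)
    (hp : ∀ x : G, (∃ n : ℕ, 1 ≤ n ∧ (⇑φ)^[n] x = x) →
      ∃ n : ℕ, 1 ≤ n ∧ n ≤ p ∧ (⇑φ)^[n] x = x)
    (hinj : Set.InjOn ⇑φ (Set.range ((⇑φ)^[k]))) :
    {n : ℕ | ∃ x : G, phiOrd ⇑φ {h} x = (n : ℕ∞)} = Set.univ ↔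
      (∀ i : ℕ, 1 ≤ i → h ∈ Set.range ((⇑φ)^[i])) ∧
        ¬ ∃ n : ℕ, 1 ≤ n ∧ (⇑φ)^[n] h = h :=
  stmt8_general φ h k hinj
end

section
/- If x ∈ ℤ^m and Q ∈ End(ℤ^m) are such that x is a periodic point of Q of period exactly k (i.e., xQ^k = x and xQ^i ≠ x for 1 ≤ i < k), then there exists an automorphism P ∈ GL_m(ℤ) of order exactly k. -/
/-!
The span `L` of the orbit `x, xQ, xQ², …` is a `Q`-invariant sublattice of `ℤ^m`, and `Q^i` fixes
all of `L` as soon as it fixes `x`, because `Q^i` commutes with every `Q^j`. Hence `Q` restricts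
to an automorphism of `L` of order exactly `k`. As `L` is free of rank `r ≤ m`, extending by the
identity on a complement `ℤ^(m - r)` embeds `End(L)` into `M_m(ℤ)` multiplicatively, and the image
of `Q|_L` is an element of `GL_m(ℤ)` of order `k`.
-/

open Module Matrix

theorem Matrix.vecMulLinear_pow_apply {R n : Type*} [CommSemiring R] [Fintype n] [DecidableEq n]
    (A : Matrix n n R) (k : ℕ) (x : n → R) : (A.vecMulLinear ^ k) x = x ᵥ* (A ^ k) := by
  induction k generalizing x with
  | zero => simp
  | succ k ih => rw [pow_succ, End.mul_apply, ih, vecMulLinear_apply, vecMul_vecMul, pow_succ']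

namespace Module.End

variable {R M : Type*} [Semiring R] [AddCommMonoid M] [Module R M]

def orbitSpan (f : Module.End R M) (x : M) : Submodule R M :=
  Submodule.span R (Set.range fun n : ℕ => (f ^ n) x)

variable (f : Module.End R M) (x : M)

theorem mem_orbitSpan_self : x ∈ f.orbitSpan x :=
  Submodule.subset_span ⟨0, by simp⟩

theorem apply_mem_orbitSpan : ∀ y ∈ f.orbitSpan x, f y ∈ f.orbitSpan x := by
  suffices f.orbitSpan x ≤ (f.orbitSpan x).comap f from fun y hy ↦ this hy
  refine Submodule.span_le.2 ?_
  rintro _ ⟨n, rfl⟩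
  exact Submodule.subset_span ⟨n + 1, by simp only [pow_succ', mul_apply]⟩

theorem pow_restrict_orbitSpan_eq_one_iff {n : ℕ} :
    f.restrict (f.apply_mem_orbitSpan x) ^ n = 1 ↔ (f ^ n) x = x := by
  rw [pow_restrict]
  constructor
  · intro h
    simpa [Subtype.ext_iff] using LinearMap.congr_fun h ⟨x, f.mem_orbitSpan_self x⟩
  · intro h
    have hfix : f.orbitSpan x ≤ LinearMap.eqLocus (f ^ n) 1 := by
      refine Submodule.span_le.2 ?_
      rintro _ ⟨i, rfl⟩
      show (f ^ n) ((f ^ i) x) = (f ^ i) x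
      rw [← mul_apply, pow_mul_comm, mul_apply, h]
    ext ⟨y, hy⟩
    exact hfix hy

theorem orderOf_restrict_orbitSpan {k : ℕ} (hk : 0 < k) (hper : (f ^ k) x = x)
    (hmin : ∀ i, 0 < i → i < k → (f ^ i) x ≠ x) :
    orderOf (f.restrict (f.apply_mem_orbitSpan x)) = k := by
  rw [orderOf_eq_iff hk, pow_restrict_orbitSpan_eq_one_iff]
  refine ⟨hper, fun i hik hi ↦ ?_⟩
  rw [Ne, pow_restrict_orbitSpan_eq_one_iff]
  exact hmin i hi hik

theorem exists_injective_monoidHom_matrix {R N : Type*} [CommSemiring R] [StrongRankCondition R]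
    [AddCommMonoid N] [Module R N] [Module.Free R N] [Module.Finite R N] {n : ℕ}
    (hn : finrank R N ≤ n) :
    ∃ φ : Module.End R N →* Matrix (Fin n) (Fin n) R, Function.Injective φ := by
  let C := Fin (n - finrank R N) → R
  have hrank : finrank R (N × C) = n := by simp [C, finrank_prod]; omega
  let b := finBasisOfFinrankEq R (N × C) hrank
  let extendById : Module.End R N →* Module.End R (N × C) :=
    (LinearMap.prodMapAlgHom R N C).toMonoidHom.comp (MonoidHom.inl _ _)
  have hext : Function.Injective extendById := by
    intro g h hgh
    ext y
    simpa [extendById] using congr(($hgh (y, 0)).1)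
  exact ⟨(LinearMap.toMatrixAlgEquiv b).toMonoidHom.comp extendById,
    (LinearMap.toMatrixAlgEquiv b).injective.comp hext⟩

end Module.End

theorem stmt11 (m k : ℕ) (hk : 1 ≤ k) (x : Fin m → ℤ)
    (Q : Matrix (Fin m) (Fin m) ℤ)
    (hxk : Matrix.vecMul x (Q ^ k) = x)
    (hmin : ∀ i : ℕ, 1 ≤ i → i < k → Matrix.vecMul x (Q ^ i) ≠ x) :
    ∃ P : Matrix.GeneralLinearGroup (Fin m) ℤ, orderOf P = k := by
  set f : Module.End ℤ (Fin m → ℤ) := Q.vecMulLinear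
  obtain ⟨φ, hφ⟩ := End.exists_injective_monoidHom_matrix (N := f.orbitSpan x)
    ((Submodule.finrank_le _).trans_eq (finrank_fin_fun ℤ))
  have hf : orderOf (f.restrict (f.apply_mem_orbitSpan x)) = k := by
    refine f.orderOf_restrict_orbitSpan x hk ?_ fun i hi hik ↦ ?_ <;>
      rw [vecMulLinear_pow_apply]
    exacts [hxk, hmin i hi hik]
  have hP : orderOf (φ (f.restrict (f.apply_mem_orbitSpan x))) = k := by
    rw [orderOf_injective φ hφ, hf]
  exact ⟨(orderOf_pos_iff.1 (hP ▸ hk)).unit, by rw [← orderOf_units, IsOfFinOrder.val_unit, hP]⟩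
end

section
/- Let ψ be an endomorphism of F' = F * ⟨c⟩ (free product with an infinite cyclic group generated by c) such that ψ(F) ⊆ F and ψ(c) = yc for some y ∈ F. Then for every k ∈ ℕ, Im(ψ^k) ∩ Fc ⊆ ψ^k(Fc); that is, every element of the coset Fc that lies in the image of ψ^k is the image under ψ^k of an element of Fc. -/
/-!
Send `F' = F * ⟨c⟩` to the unrestricted wreath product `(ℤ → F) ⋊ ℤ` by `x ↦ δ₀ x`, `c ↦ shift`.
An endomorphism `χ` with `χ(F) ⊆ F` and `χ(c) = y c`, `y ∈ F`, becomes on the wreath product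
"apply `χ` pointwise, then conjugate by `Z`", where `Z` is `y⁻¹` at negative positions and `1`
elsewhere. If `χ v ∈ F`, then `v` has `c`-exponent sum `0` (as `χ` preserves it), so its image
has no `ℤ`-part, and as `Z 0 = 1` the `0`-th coordinate `g ∈ F` of `v` satisfies
`χ g = (0-th coordinate of χ v) = χ v`. Such endomorphisms form a monoid, so this applies to `χ = ψ^k`;
if `ψ^k u ∈ F c`, then `v = u c⁻¹` gives `ψ^k (g c) = ψ^k u`.
-/

open SemidirectProduct

abbrev IntWreath (G : Type*) [Group G] := (ℤ → G) ⋊[mulAutArrow] Multiplicative ℤ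

namespace IntWreath

variable {G : Type*} [Group G]

theorem mulAutArrow_apply_int (t : Multiplicative ℤ) (a : ℤ → G) (m : ℤ) :
    mulAutArrow t a m = a (m - t.toAdd) := by
  rw [sub_eq_neg_add]
  rfl

def twistedMap (χ : G →* G) (Z : ℤ → G) : IntWreath G →* IntWreath G :=
  (MulAut.conj (inl Z)).toMonoidHom.comp <| map (χ.compLeft ℤ) (MonoidHom.id _) fun _ => by
    ext a m
    rfl

variable (χ : G →* G) (Z : ℤ → G)

@[simp]
theorem right_twistedMap (w : IntWreath G) : (twistedMap χ Z w).right = w.right := by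
  simp [twistedMap]

theorem twistedMap_inl (a : ℤ → G) :
    twistedMap χ Z (inl a) = inl (Z * χ.compLeft ℤ a * Z⁻¹) := by
  simp [twistedMap]

theorem twistedMap_inr (t : Multiplicative ℤ) :
    twistedMap χ Z (inr t) = inl (Z * (mulAutArrow t Z)⁻¹) * inr t := by
  simp only [twistedMap, MonoidHom.comp_apply, map_inr, MulEquiv.coe_toMonoidHom,
    MulAut.conj_apply, MonoidHom.id_apply]
  rw [map_mul, map_inv, inl_aut, map_inv]
  group

end IntWreath

open IntWreath

theorem FreeGroup.exists_comp_eq_of_range_le {α H K : Type*} [Group H] [Group K]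
    {f : FreeGroup α →* K} {g : H →* K} (h : f.range ≤ g.range) :
    ∃ l : FreeGroup α →* H, g.comp l = f := by
  choose l hl using fun x => h ⟨.of x, rfl⟩
  exact ⟨FreeGroup.lift l, FreeGroup.ext_hom _ _ fun x => by simp [hl]⟩

def Subgroup.cosetPreservingEnd {H : Type*} [Group H] (F : Subgroup H) (c : H) :
    Submonoid (Monoid.End H) where
  carrier := {χ | F ≤ F.comap χ ∧ χ c * c⁻¹ ∈ F}
  one_mem' := ⟨fun _ hf => hf, by simp⟩
  mul_mem' := by
    rintro χ₁ χ₂ ⟨hF₁, hc₁⟩ ⟨hF₂, hc₂⟩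
    refine ⟨fun f hf => hF₁ (hF₂ hf), ?_⟩
    have : (χ₁ * χ₂) c * c⁻¹ = χ₁ (χ₂ c * c⁻¹) * (χ₁ c * c⁻¹) := by
      simp only [Monoid.End.coe_mul, Function.comp_apply, map_mul, map_inv]
      group
    exact this ▸ mul_mem (hF₁ hc₂) hc₁

section

variable {X : Type*}

def toIntWreath : FreeGroup (Option X) →* IntWreath (FreeGroup X) :=
  FreeGroup.lift fun o => o.elim (inr (.ofAdd 1)) fun x => inl (Pi.mulSingle 0 (.of x))

theorem toIntWreath_of_none : toIntWreath (.of (none : Option X)) = inr (.ofAdd 1) :=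
  FreeGroup.lift_apply_of

theorem toIntWreath_map_some (g : FreeGroup X) :
    toIntWreath (FreeGroup.map some g) = inl (Pi.mulSingle 0 g) := by
  have : toIntWreath.comp (FreeGroup.map some) =
      inl.comp (MonoidHom.mulSingle (fun _ : ℤ => FreeGroup X) 0) := by
    apply FreeGroup.ext_hom
    intro x
    simp [toIntWreath]
  exact DFunLike.congr_fun this g

-- `Z m * (Z (m - 1))⁻¹ = Pi.mulSingle 0 y` accounts for `χ c = y c`, and `Z 0 = 1` for `χ(F) ⊆ F`.
theorem toIntWreath_comp_eq_twistedMap_comp {χ : FreeGroup (Option X) →* FreeGroup (Option X)}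
    {χ' : FreeGroup X →* FreeGroup X} {y : FreeGroup X}
    (hχ : χ.comp (FreeGroup.map some) = (FreeGroup.map some).comp χ')
    (hc : χ (.of none) = FreeGroup.map some y * .of none) :
    toIntWreath.comp χ =
      (twistedMap χ' fun m => if m < 0 then y⁻¹ else 1).comp toIntWreath := by
  ext (_ | x) : 1
  · simp only [MonoidHom.comp_apply, hc, map_mul, toIntWreath_map_some, toIntWreath_of_none,
      twistedMap_inr]
    rw [← map_inv, ← map_mul]
    congr 2
    funext m
    simp only [Pi.mul_apply, Pi.inv_apply, mulAutArrow_apply_int, Pi.mulSingle_apply, toAdd_ofAdd]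
    split_ifs <;> first | omega | simp
  · rw [MonoidHom.comp_apply, MonoidHom.comp_apply, ← FreeGroup.map.of,
      ← MonoidHom.comp_apply χ, hχ, MonoidHom.comp_apply, toIntWreath_map_some,
      toIntWreath_map_some, twistedMap_inl]
    congr 1
    funext m
    simp only [Pi.mul_apply, Pi.inv_apply, MonoidHom.compLeft_apply, Function.comp_apply,
      Pi.mulSingle_apply]
    split_ifs <;> simp_all

theorem map_map_some_toIntWreath_left_zero {χ : FreeGroup (Option X) →* FreeGroup (Option X)}
    {χ' : FreeGroup X →* FreeGroup X} {y : FreeGroup X}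
    (hχ : χ.comp (FreeGroup.map some) = (FreeGroup.map some).comp χ')
    (hc : χ (.of none) = FreeGroup.map some y * .of none)
    {v : FreeGroup (Option X)} {h : FreeGroup X} (hv : χ v = FreeGroup.map some h) :
    χ (FreeGroup.map some ((toIntWreath v).left 0)) = χ v := by
  have key := DFunLike.congr_fun (toIntWreath_comp_eq_twistedMap_comp hχ hc) v
  simp only [MonoidHom.comp_apply, hv, toIntWreath_map_some] at key
  have hright : (toIntWreath v).right = 1 := by
    simpa using (congrArg SemidirectProduct.right key).symm
  rw [← inl_left_mul_inr_right (toIntWreath v), hright, map_one, mul_one, twistedMap_inl] at key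
  have h_eq : h = χ' ((toIntWreath v).left 0) := by
    simpa using congrFun (congrArg SemidirectProduct.left key) 0
  rw [← MonoidHom.comp_apply χ, hχ, MonoidHom.comp_apply, ← h_eq, hv]

theorem exists_mem_range_map_some_eq {χ : Monoid.End (FreeGroup (Option X))}
    (hχ : χ ∈ (FreeGroup.map some).range.cosetPreservingEnd (.of none))
    {v : FreeGroup (Option X)} (hv : χ v ∈ (FreeGroup.map some).range) :
    ∃ g ∈ (FreeGroup.map some).range, χ g = χ v := by
  obtain ⟨χ', hχ'⟩ := FreeGroup.exists_comp_eq_of_range_le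
    (f := MonoidHom.comp χ (FreeGroup.map some)) (g := FreeGroup.map some)
    (by rintro _ ⟨g, rfl⟩; exact hχ.1 ⟨g, rfl⟩)
  obtain ⟨y, hy⟩ := hχ.2
  obtain ⟨h, hh⟩ := hv
  exact ⟨_, ⟨_, rfl⟩,
    map_map_some_toIntWreath_left_zero hχ'.symm (eq_mul_of_mul_inv_eq hy.symm) hh.symm⟩

end

theorem stmt19 (X : Type*) (ψ : FreeGroup (Option X) →* FreeGroup (Option X))
    (F : Subgroup (FreeGroup (Option X)))
    (hF : F = Subgroup.closure (Set.range fun x : X => FreeGroup.of (some x)))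
    (hX : ∀ x : X, ψ (FreeGroup.of (some x)) ∈ F)
    (y : FreeGroup (Option X)) (hy : y ∈ F)
    (hc : ψ (FreeGroup.of none) = y * FreeGroup.of none) :
    ∀ k : ℕ, ∀ z : FreeGroup (Option X),
      z ∈ Set.range ((⇑ψ)^[k]) → (∃ f ∈ F, z = f * FreeGroup.of none) →
      ∃ w : FreeGroup (Option X),
        (∃ f ∈ F, w = f * FreeGroup.of none) ∧ (⇑ψ)^[k] w = z := by
  have hF_range : F = (FreeGroup.map some).range := by
    rw [hF, FreeGroup.range_map, ← Set.range_comp]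
    rfl
  let φ : Monoid.End (FreeGroup (Option X)) := ψ
  have hφ : φ ∈ F.cosetPreservingEnd (.of none) := by
    refine ⟨?_, show ψ (.of none) * (.of none)⁻¹ ∈ F by rwa [hc, mul_inv_cancel_right]⟩
    have := (Subgroup.closure_le (F.comap ψ)).2 (Set.range_subset_iff.2 hX)
    rwa [← hF] at this
  rintro k _ ⟨u, rfl⟩ ⟨f, hf, hfu⟩
  have hφk := pow_mem hφ k
  rw [show (⇑ψ)^[k] = ⇑(φ ^ k) from rfl] at hfu ⊢
  rw [hF_range] at hφk hf
  have hv : (φ ^ k) (u * (.of none)⁻¹) = f * ((φ ^ k) (.of none) * (.of none)⁻¹)⁻¹ := by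
    rw [map_mul, map_inv, hfu]
    group
  obtain ⟨g, hg, hgv⟩ := exists_mem_range_map_some_eq hφk (hv ▸ mul_mem hf (inv_mem hφk.2))
  refine ⟨g * .of none, ⟨g, hF_range ▸ hg, rfl⟩, ?_⟩
  rw [map_mul, hgv, map_mul, map_inv, inv_mul_cancel_right]
end
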